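/- arXiv:2309.08463 — 2 statements merged into one kernel-verified Lean document; each statement's English description precedes it below -/
import Mathlib

section
/- Let V be a valuation ring and 𝔭 ⊆ V a prime ideal. Then the commutative square of rings with vertices V, V_𝔭, V/𝔭 and κ(𝔭) = V_𝔭/𝔭V_𝔭 is cartesian: the natural map from V to the fibre product {(x, y) ∈ (V/𝔭) × V_𝔭 : x and y have the same image in κ(𝔭)} is an isomorphism. -/
lemma val_map_prime_eq_image
    (V : Type*) [CommRing V] [IsDomain V] [ValuationRing V]
    (𝔭 : Ideal V) [𝔭.IsPrime] {z : Localization.AtPrime 𝔭}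
    (hz : z ∈ Ideal.map (algebraMap V (Localization.AtPrime 𝔭)) 𝔭) :
    ∃ q ∈ 𝔭, algebraMap V (Localization.AtPrime 𝔭) q = z := by
  obtain ⟨⟨⟨p, hp⟩, s⟩, h⟩ :=
    (IsLocalization.mem_map_algebraMap_iff 𝔭.primeCompl _).mp hz
  -- s ∣ p in V
  have hsp : (s : V) ∣ p := by
    rcases ValuationRing.dvd_total (s : V) p with h' | h'
    · exact h'
    · exact absurd (𝔭.mem_of_dvd h' hp) s.2
  obtain ⟨q, hq⟩ := hsp
  have hqmem : q ∈ 𝔭 := by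
    have : (s : V) * q ∈ 𝔭 := hq ▸ hp
    rcases (Ideal.IsPrime.mem_or_mem ‹𝔭.IsPrime› this) with h' | h'
    · exact absurd h' s.2
    · exact h'
  refine ⟨q, hqmem, ?_⟩
  have hu := IsLocalization.map_units (Localization.AtPrime 𝔭) s
  apply hu.mul_left_cancel
  simp only at h
  rw [mul_comm] at h
  rw [h, hq, map_mul]

/-- For a valuation ring `V` and a prime `𝔭`, the square with vertices `V`, `V/𝔭`,
`V_𝔭` and `κ(𝔭) = V_𝔭/𝔭V_𝔭` is cartesian: the natural map from `V` to the fibre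
product is an isomorphism, i.e. the map `a ↦ (a mod 𝔭, a/1)` is injective with image
exactly the set of pairs having the same image in `κ(𝔭)`. -/
theorem valuation_ring_prime_square_is_cartesian
    (V : Type*) [CommRing V] [IsDomain V] [ValuationRing V]
    (𝔭 : Ideal V) [𝔭.IsPrime] :
    Function.Injective
      (fun a : V => ((Ideal.Quotient.mk 𝔭 a, algebraMap V (Localization.AtPrime 𝔭) a) :
        (V ⧸ 𝔭) × Localization.AtPrime 𝔭)) ∧
    Set.range
      (fun a : V => ((Ideal.Quotient.mk 𝔭 a, algebraMap V (Localization.AtPrime 𝔭) a) :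
        (V ⧸ 𝔭) × Localization.AtPrime 𝔭)) =
      {z : (V ⧸ 𝔭) × Localization.AtPrime 𝔭 |
        Ideal.Quotient.lift 𝔭
          ((Ideal.Quotient.mk (Ideal.map (algebraMap V (Localization.AtPrime 𝔭)) 𝔭)).comp
            (algebraMap V (Localization.AtPrime 𝔭)))
          (fun a ha => Ideal.Quotient.eq_zero_iff_mem.mpr (Ideal.mem_map_of_mem _ ha)) z.1 =
        Ideal.Quotient.mk (Ideal.map (algebraMap V (Localization.AtPrime 𝔭)) 𝔭) z.2} := by
  have hinj : Function.Injective (algebraMap V (Localization.AtPrime 𝔭)) :=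
    IsLocalization.injective _ 𝔭.primeCompl_le_nonZeroDivisors
  constructor
  · intro a b hab
    exact hinj (congrArg Prod.snd hab)
  · ext ⟨x, y⟩
    constructor
    · rintro ⟨a, ha⟩
      obtain ⟨h1, h2⟩ := Prod.mk.injEq .. ▸ ha
      simp only [Set.mem_setOf_eq, ← h1, ← h2, Ideal.Quotient.lift_mk, RingHom.comp_apply]
    · intro hxy
      obtain ⟨a, rfl⟩ := Ideal.Quotient.mk_surjective x
      simp only [Set.mem_setOf_eq, Ideal.Quotient.lift_mk, RingHom.comp_apply] at hxy
      have : y - algebraMap V (Localization.AtPrime 𝔭) a ∈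
          Ideal.map (algebraMap V (Localization.AtPrime 𝔭)) 𝔭 := by
        rw [← Ideal.Quotient.eq_zero_iff_mem, map_sub, hxy, sub_self]
      obtain ⟨q, hq, hqz⟩ := val_map_prime_eq_image V 𝔭 this
      refine ⟨a + q, ?_⟩
      simp only [Prod.mk.injEq]
      constructor
      · rw [map_add, Ideal.Quotient.eq_zero_iff_mem.mpr hq, add_zero]
      · rw [map_add, hqz]; ring
end

section
/- Let p be a prime and M an abelian group that is derived p-complete, in the sense that Hom_ℤ(ℤ[1/p], M) = 0 and Ext^1_ℤ(ℤ[1/p], M) = 0. If moreover M[1/p] = 0 (i.e., every element of M is killed by a power of p), then M has bounded p-power torsion: there exists n ≥ 0 with p^n · M = 0. -/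
/-!
Presenting `ℤ[1/p]` as `ℤ[X]/(1 - pX)`, a homomorphism `ℤ[1/p] → M` is a sequence `(aₙ)` with
`aₙ = p aₙ₊₁`, and splitting the pushout of `0 → ℤ[X] → ℤ[X] → ℤ[1/p] → 0` along `Xⁿ ↦ wₙ` solves
`aₙ = wₙ + p aₙ₊₁`, i.e. gives a meaning to `a₀ = ∑ pᵏ wₖ`, for every sequence `(wₙ)`.

If no power of `p` kills `M`, the first property yields for all `j, c` an `x` with
`pʲ x ∉ pʲ⁺¹ M + M[pᶜ]`: otherwise `pʲ⁺ᶜ M ⊆ pʲ⁺ᶜ⁺¹ M`, and dividing by `p` repeatedly produces a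
compatible sequence starting at any element of `pʲ⁺ᶜ M`. Take `w_K` such an element for `j = 2K`
and `c = τ_K` exceeding the orders of `w₀, …, w_{K-1}`. If `p^T` kills `a₀ = ∑ pᵏ wₖ`, then
`p^{2T} w_T ∈ p^{2T+1} M + M[p^{τ_T}]`, a contradiction.
-/

open Polynomial

/-- `Ext¹_ℤ(L, M) = 0`. -/
def ExtSplits (L M : Type) [AddCommGroup L] [AddCommGroup M] : Prop :=
  ∀ (E : Type) [AddCommGroup E] (ι : M →+ E) (π : E →+ L),
    Function.Injective ι → Function.Surjective π → (∀ e : E, π e = 0 ↔ ∃ m : M, ι m = e) →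
    ∃ s : L →+ E, ∀ z, π (s z) = z

theorem AddMonoidHom.eq_zero_of_ker_le {F L M : Type*} [AddCommGroup F] [AddCommGroup L]
    [AddCommGroup M] {ρ : F →+ L} (hρ : Function.Surjective ρ) (hL : ∀ f : L →+ M, f = 0)
    {g : F →+ M} (hg : ρ.ker ≤ g.ker) : g = 0 := by
  ext x
  rw [← ρ.liftOfRightInverse_comp_apply _ (Function.rightInverse_surjInv hρ) ⟨g, hg⟩,
    hL (ρ.liftOfSurjective hρ ⟨g, hg⟩)]
  rfl

section

variable {F₀ F₁ L M : Type*} [AddCommGroup F₀] [AddCommGroup F₁] [AddCommGroup L]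
  [AddCommGroup M] (φ : F₁ →+ M) (d : F₁ →+ F₀)

abbrev Pushout := (M × F₀) ⧸ (φ.prod (-d)).range

namespace Pushout

def inl : M →+ Pushout φ d := (QuotientAddGroup.mk' _).comp (AddMonoidHom.inl M F₀)

def inr : F₀ →+ Pushout φ d := (QuotientAddGroup.mk' _).comp (AddMonoidHom.inr M F₀)

theorem inr_apply_eq_inl_apply (c : F₁) : inr φ d (d c) = inl φ d (φ c) := by
  refine (QuotientAddGroup.eq_iff_sub_mem).mpr ⟨-c, ?_⟩
  ext <;> simp

theorem inl_add_inr (m : M) (x : F₀) : inl φ d m + inr φ d x = QuotientAddGroup.mk (m, x) := by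
  simp [inl, inr, ← QuotientAddGroup.mk_add]

theorem inl_injective (hd : Function.Injective d) : Function.Injective (inl φ d) := by
  refine (injective_iff_map_eq_zero _).mpr fun m hm => ?_
  obtain ⟨c, hc⟩ := (QuotientAddGroup.eq_zero_iff _).mp hm
  have hc0 : c = 0 := hd (by simpa using congrArg Prod.snd hc)
  simpa [hc0] using (congrArg Prod.fst hc).symm

variable {φ d}

def desc (ρ : F₀ →+ L) (hρ : ∀ c, ρ (d c) = 0) : Pushout φ d →+ L :=
  QuotientAddGroup.lift _ (ρ.comp (AddMonoidHom.snd M F₀)) <| by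
    rintro _ ⟨c, rfl⟩
    simpa using hρ c

@[simp]
theorem desc_inr (ρ : F₀ →+ L) (hρ : ∀ c, ρ (d c) = 0) (x : F₀) :
    desc ρ hρ (inr φ d x) = ρ x :=
  rfl

@[simp]
theorem desc_inl (ρ : F₀ →+ L) (hρ : ∀ c, ρ (d c) = 0) (m : M) : desc ρ hρ (inl φ d m) = 0 := by
  simp [desc, inl]

theorem desc_eq_zero_iff (ρ : F₀ →+ L) (hρ : ∀ c, ρ (d c) = 0) (hexact : ρ.ker ≤ d.range)
    (e : Pushout φ d) : desc ρ hρ e = 0 ↔ ∃ m, inl φ d m = e := by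
  refine ⟨fun he => ?_, fun ⟨m, hm⟩ => hm ▸ desc_inl ρ hρ m⟩
  induction e using QuotientAddGroup.induction_on with
  | H mx =>
    obtain ⟨c, hc⟩ := hexact he
    refine ⟨mx.1 + φ c, ?_⟩
    rw [map_add, ← inr_apply_eq_inl_apply, hc, inl_add_inr]
    rfl

end Pushout

end

open Pushout in
theorem exists_comp_eq_of_extSplits {F₀ F₁ L M : Type} [AddCommGroup F₀] [AddCommGroup F₁]
    [AddCommGroup L] [AddCommGroup M] {ρ : F₀ →+ L} {d : F₁ →+ F₀} (hd : Function.Injective d)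
    (hρ : Function.Surjective ρ) (hexact : ρ.ker = d.range) (hL : ExtSplits L M) (φ : F₁ →+ M) :
    ∃ ψ : F₀ →+ M, ψ.comp d = φ := by
  have hρd : ∀ c, ρ (d c) = 0 := fun c => hexact.ge ⟨c, rfl⟩
  obtain ⟨s, hs⟩ := hL (Pushout φ d) (inl φ d) (desc ρ hρd) (inl_injective φ d hd)
    (fun z => let ⟨x, hx⟩ := hρ z; ⟨inr φ d x, by rw [desc_inr, hx]⟩)
    (desc_eq_zero_iff ρ hρd hexact.le)
  -- `ψ` is the retraction `inl⁻¹ ∘ (inr - s ∘ ρ)` of the split extension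
  let h : F₀ →+ Pushout φ d := inr φ d - s.comp ρ
  have hh : ∀ x, h x ∈ (inl φ d).range := fun x =>
    (desc_eq_zero_iff ρ hρd hexact.le _).mp (by simp [h, hs])
  let ψ := (AddMonoidHom.ofInjective (inl_injective φ d hd)).symm.toAddMonoidHom.comp
    (h.codRestrict _ hh)
  have hψ : ∀ x, inl φ d (ψ x) = h x := fun x =>
    congrArg Subtype.val ((AddMonoidHom.ofInjective (inl_injective φ d hd)).apply_symm_apply _)
  refine ⟨ψ, AddMonoidHom.ext fun c => inl_injective φ d hd ?_⟩
  rw [AddMonoidHom.comp_apply, hψ]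
  simp [h, inr_apply_eq_inl_apply, hρd]

namespace BoundedTorsion

section Presentation

variable (p : ℕ)

noncomputable def toAway : ℤ[X] →+ Localization.Away (p : ℤ) :=
  ((Localization.awayEquivAdjoin (p : ℤ)).symm :
    AdjoinRoot (C (p : ℤ) * X - 1) →+* _).toAddMonoidHom.comp (AdjoinRoot.mk _).toAddMonoidHom

theorem toAway_surjective : Function.Surjective (toAway p) :=
  (Localization.awayEquivAdjoin (p : ℤ)).symm.surjective.comp AdjoinRoot.mk_surjective

theorem ker_toAway : (toAway p).ker = (AddMonoidHom.mulLeft (1 - C (p : ℤ) * X)).range := by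
  ext f
  have h : toAway p f = (Localization.awayEquivAdjoin (p : ℤ)).symm (AdjoinRoot.mk _ f) := rfl
  rw [AddMonoidHom.mem_ker, h, map_eq_zero_iff _ (AlgEquiv.injective _), AdjoinRoot.mk_eq_zero,
    ← neg_sub, neg_dvd]
  exact ⟨fun ⟨g, hg⟩ => ⟨g, hg.symm⟩, fun ⟨g, hg⟩ => ⟨g, hg.symm⟩⟩

theorem mulLeft_one_sub_injective :
    Function.Injective (AddMonoidHom.mulLeft (1 - C (p : ℤ) * X)) :=
  mul_right_injective₀ fun h => by simpa using congrArg (eval 0) h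

variable {M : Type*} [AddCommGroup M]

noncomputable def seqHom (a : ℕ → M) : ℤ[X] →+ M :=
  (lsum fun n => LinearMap.toSpanSingleton ℤ M (a n)).toAddMonoidHom

@[simp]
theorem seqHom_monomial (a : ℕ → M) (n : ℕ) (r : ℤ) : seqHom a (monomial n r) = r • a n := by
  simp [seqHom]

theorem seqHom_apply_monomial_one (ψ : ℤ[X] →+ M) : seqHom (fun n => ψ (monomial n 1)) = ψ :=
  addHom_ext fun n r => by
    rw [seqHom_monomial, ← map_zsmul, smul_monomial, smul_eq_mul, mul_one]

theorem seqHom_comp_mulLeft (a : ℕ → M) :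
    (seqHom a).comp (AddMonoidHom.mulLeft (1 - C (p : ℤ) * X)) =
      seqHom fun n => a n - p • a (n + 1) :=
  addHom_ext fun n r => by
    rw [AddMonoidHom.comp_apply, AddMonoidHom.coe_mulLeft, sub_mul, one_mul, mul_assoc,
      X_mul_monomial, C_mul_monomial, map_sub, seqHom_monomial, seqHom_monomial, seqHom_monomial,
      mul_comm, mul_smul, natCast_zsmul, smul_sub]

theorem eq_zero_of_eq_nsmul_succ (hHom : ∀ f : Localization.Away (p : ℤ) →+ M, f = 0)
    {a : ℕ → M} (ha : ∀ n, a n = p • a (n + 1)) : a 0 = 0 := by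
  have hker : (toAway p).ker ≤ (seqHom a).ker := by
    rintro _ hf
    obtain ⟨f, rfl⟩ := (ker_toAway p).le hf
    rw [AddMonoidHom.mem_ker, ← AddMonoidHom.comp_apply, seqHom_comp_mulLeft]
    simp [← ha, seqHom, Polynomial.sum_def]
  simpa only [seqHom_monomial, one_smul, AddMonoidHom.zero_apply] using congrArg (· (monomial 0 1))
    (AddMonoidHom.eq_zero_of_ker_le (toAway_surjective p) hHom hker)

theorem exists_eq_add_nsmul_succ {M : Type} [AddCommGroup M]
    (hExt : ExtSplits (Localization.Away (p : ℤ)) M) (w : ℕ → M) :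
    ∃ a : ℕ → M, ∀ n, a n = w n + p • a (n + 1) := by
  obtain ⟨ψ, hψ⟩ := exists_comp_eq_of_extSplits (mulLeft_one_sub_injective p)
    (toAway_surjective p) (ker_toAway p) hExt (seqHom w)
  refine ⟨fun n => ψ (monomial n 1), fun n => sub_eq_iff_eq_add.mp ?_⟩
  rw [← seqHom_apply_monomial_one ψ, seqHom_comp_mulLeft] at hψ
  simpa using congrArg (· (monomial n 1)) hψ

end Presentation

section Torsion

variable {M : Type*} [AddCommGroup M] {p : ℕ}

theorem pow_nsmul_eq_zero_of_le {m n : ℕ} (h : m ≤ n) {x : M} (hx : p ^ m • x = 0) :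
    p ^ n • x = 0 := by
  rw [← Nat.sub_add_cancel h, pow_add, mul_smul, hx, smul_zero]

theorem eq_sum_add_pow_nsmul_of_eq_add_nsmul {a w : ℕ → M} (h : ∀ n, a n = w n + p • a (n + 1))
    (c : ℕ) : a 0 = ∑ k ∈ Finset.range c, p ^ k • w k + p ^ c • a c := by
  induction c with
  | zero => simp
  | succ c ih =>
    rw [ih, h c, Finset.sum_range_succ, nsmul_add, ← mul_nsmul', ← pow_succ, add_assoc]

variable (hcompat : ∀ a : ℕ → M, (∀ n, a n = p • a (n + 1)) → a 0 = 0)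
include hcompat

theorem pow_nsmul_eq_zero_of_forall_exists {k : ℕ}
    (h : ∀ x : M, ∃ u, p ^ k • x = p ^ (k + 1) • u) (x : M) : p ^ k • x = 0 := by
  choose f hf using h
  refine hcompat (fun n => p ^ k • f^[n] x) fun n => ?_
  rw [Function.iterate_succ_apply', hf, pow_succ', mul_smul]

theorem exists_pow_nsmul_ne_add (hunb : ∀ n, ∃ x : M, p ^ n • x ≠ 0) (j c : ℕ) :
    ∃ x : M, ∀ u v : M, p ^ c • v = 0 → p ^ j • x ≠ p ^ (j + 1) • u + v := by
  by_contra! h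
  obtain ⟨x, hx⟩ := hunb (c + j)
  refine hx (pow_nsmul_eq_zero_of_forall_exists hcompat (fun y => ?_) x)
  obtain ⟨u, v, hv, hy⟩ := h y
  refine ⟨u, ?_⟩
  rw [pow_add, mul_smul, hy, smul_add, hv, add_zero, smul_smul, ← pow_add, add_assoc]

theorem exists_pow_nsmul_eq_zero
    (hsolve : ∀ w : ℕ → M, ∃ a : ℕ → M, ∀ n, a n = w n + p • a (n + 1))
    (htors : ∀ x : M, ∃ n, p ^ n • x = 0) : ∃ n, ∀ x : M, p ^ n • x = 0 := by
  by_contra! hunb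
  choose t ht using htors
  choose X hX using exists_pow_nsmul_ne_add hcompat hunb
  let τ : ℕ → ℕ := fun K => Nat.rec 0 (fun K c => c + t (X (2 * K) c)) K
  let w : ℕ → M := fun K => X (2 * K) (τ K)
  have hτ : ∀ K, τ (K + 1) = τ K + t (w K) := fun _ => rfl
  have hkill : ∀ k K, k < K → p ^ τ K • w k = 0 := fun k K hkK =>
    have hmono : Monotone τ := monotone_nat_of_le_succ fun K => (hτ K).symm ▸ Nat.le_add_right _ _
    pow_nsmul_eq_zero_of_le ((hτ k ▸ Nat.le_add_left _ _).trans (hmono hkK)) (ht (w k))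
  obtain ⟨a, ha⟩ := hsolve w
  obtain ⟨T, h0⟩ : ∃ T, p ^ T • a 0 = 0 := ⟨_, ht (a 0)⟩
  rw [eq_sum_add_pow_nsmul_of_eq_add_nsmul ha (T + 1), Finset.sum_range_succ] at h0
  simp only [smul_add, Finset.smul_sum, smul_smul, ← pow_add] at h0
  refine hX (2 * T) (τ T) (-a (T + 1)) (-∑ k ∈ Finset.range T, p ^ (T + k) • w k) ?_ ?_
  · rw [smul_neg, Finset.smul_sum, neg_eq_zero]
    refine Finset.sum_eq_zero fun k hk => ?_
    rw [smul_comm, hkill k T (Finset.mem_range.mp hk), smul_zero]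
  · change p ^ (2 * T) • w T = _
    rw [smul_neg, ← neg_add, eq_neg_iff_add_eq_zero, ← h0, two_mul, add_assoc]
    abel

end Torsion

end BoundedTorsion

theorem bounded_p_torsion_of_derived_p_complete_general
    (p : ℕ) (M : Type) [AddCommGroup M]
    (hHom : ∀ f : Localization.Away (p : ℤ) →+ M, f = 0)
    (hExt : ∀ (E : Type) [AddCommGroup E]
      (ι : M →+ E) (π : E →+ Localization.Away (p : ℤ)),
      Function.Injective ι → Function.Surjective π →
      (∀ e : E, π e = 0 ↔ ∃ m : M, ι m = e) →
      ∃ s : Localization.Away (p : ℤ) →+ E, ∀ z, π (s z) = z)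
    (htors : ∀ x : M, ∃ n : ℕ, p ^ n • x = 0) :
    ∃ n : ℕ, ∀ x : M, p ^ n • x = 0 :=
  BoundedTorsion.exists_pow_nsmul_eq_zero
    (fun _ => BoundedTorsion.eq_zero_of_eq_nsmul_succ p hHom)
    (BoundedTorsion.exists_eq_add_nsmul_succ p hExt) htors

/-- (Bhatt) A derived `p`-complete abelian group `M` (no maps and no extensions from
`ℤ[1/p]`) in which every element is killed by a power of `p` has bounded `p`-power
torsion. -/
theorem bounded_p_torsion_of_derived_p_complete
    (p : ℕ) (hp : p.Prime) (M : Type) [AddCommGroup M]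
    (hHom : ∀ f : Localization.Away (p : ℤ) →+ M, f = 0)
    (hExt : ∀ (E : Type) [AddCommGroup E]
      (ι : M →+ E) (π : E →+ Localization.Away (p : ℤ)),
      Function.Injective ι → Function.Surjective π →
      (∀ e : E, π e = 0 ↔ ∃ m : M, ι m = e) →
      ∃ s : Localization.Away (p : ℤ) →+ E, ∀ z, π (s z) = z)
    (htors : ∀ x : M, ∃ n : ℕ, p ^ n • x = 0) :
    ∃ n : ℕ, ∀ x : M, p ^ n • x = 0 :=
  bounded_p_torsion_of_derived_p_complete_general p M hHom hExt htors
end
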